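/- arXiv:1202.6099 — 3 statements merged into one kernel-verified Lean document; each statement's English description precedes it below -/
import Mathlib

section
/- Let w = u + iv ∈ ℂ with |u| ≤ 5/2 and |v| ≤ √6/10, and let z ∈ ℂ with Re z ≤ 1. Then the real part of w₁ = w⁴ + 4(2 − z) satisfies Re w₁ > 5/2. -/
/-! Since `Re w⁴ = u⁴ - 6u²v² + v⁴ = (u² - 3v²)² - 8v⁴ ≥ -8v⁴` and `v² ≤ 6/100`, the quartic term
costs at most `8 · 36/10⁴ < 3/2`, while `Re (4(2 - z)) ≥ 4`. -/

namespace Complex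

theorem re_pow_four (w : ℂ) : (w ^ 4).re = (w.re ^ 2 - 3 * w.im ^ 2) ^ 2 - 8 * w.im ^ 4 := by
  simp only [pow_succ, pow_zero, one_mul, mul_re, mul_im]
  ring

theorem neg_eight_mul_im_pow_four_le_re_pow_four (w : ℂ) : -8 * w.im ^ 4 ≤ (w ^ 4).re := by
  rw [re_pow_four]
  nlinarith [sq_nonneg (w.re ^ 2 - 3 * w.im ^ 2)]

end Complex

theorem stmt6_general (w z : ℂ)
    (hv : |w.im| ≤ Real.sqrt 6 / 10) (hz : z.re ≤ 1) :
    5 / 2 < (w ^ 4 + 4 * (2 - z)).re := by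
  have hv2 : w.im ^ 2 ≤ 6 / 100 := by
    calc w.im ^ 2 = |w.im| ^ 2 := (sq_abs _).symm
      _ ≤ (Real.sqrt 6 / 10) ^ 2 := pow_le_pow_left₀ (abs_nonneg _) hv 2
      _ = 6 / 100 := by rw [div_pow, Real.sq_sqrt (by norm_num)]; norm_num
  have hv4 : w.im ^ 4 ≤ 36 / 10000 := by
    nlinarith [sq_nonneg w.im]
  have hquartic := Complex.neg_eight_mul_im_pow_four_le_re_pow_four w
  have hre : (w ^ 4 + 4 * (2 - z)).re = (w ^ 4).re + 4 * (2 - z.re) := by simp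
  linarith

/-- If `|Re w| ≤ 5/2`, `|Im w| ≤ √6/10` and `Re z ≤ 1`, then `Re (w⁴ + 4(2 - z)) > 5/2`. -/
theorem stmt6 (w z : ℂ)
    (hu : |w.re| ≤ 5 / 2) (hv : |w.im| ≤ Real.sqrt 6 / 10) (hz : z.re ≤ 1) :
    5 / 2 < (w ^ 4 + 4 * (2 - z)).re :=
  stmt6_general w z hv hz
end

section
/- Fix real numbers δ' with 0 < δ' < 1/4 and r with 0 < r < 7/128, and ε ≤ δ'/8. Let S = {x + yi ∈ ℂ : |x| ≤ 1/4, |y| ≤ δ'}. Then for any z ∈ ℂ with |z − 2| ≤ r and |Im z| ≤ ε, and any w ∈ S, the point w₁ = w⁴ + 4(2 − z) lies in the interior of S, i.e., |Re w₁| < 1/4 and |Im w₁| < δ'. -/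
/-!
Both estimates come from `w₁ = w⁴ - 4(z - 2)`. On the rectangle `‖w‖² ≤ 1/16 + δ'² < 1/8`, so
`|Re w₁| ≤ ‖w‖⁴ + 4r < 1/64 + 7/32 < 1/4`. For the imaginary part, `Im w⁴ = 4uv(u² - v²)` carries
the factor `v`, so `|Im w⁴| ≤ 4 · (1/4) · (1/16) · |v| ≤ δ'/16`, while `4|Im z| ≤ δ'/2`.
-/

section LinearOrderedRing

variable {α : Type*} [Ring α] [LinearOrder α] [IsStrictOrderedRing α] {u v a : α}

lemma sq_le_sq_of_abs_le (hu : |u| ≤ a) : u ^ 2 ≤ a ^ 2 :=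
  sq_le_sq' (abs_le.mp hu).1 (abs_le.mp hu).2

lemma abs_sq_sub_sq_le (hu : |u| ≤ a) (hv : |v| ≤ a) : |u ^ 2 - v ^ 2| ≤ a ^ 2 :=
  abs_sub_le_of_nonneg_of_le (sq_nonneg u) (sq_le_sq_of_abs_le hu) (sq_nonneg v)
    (sq_le_sq_of_abs_le hv)

end LinearOrderedRing

namespace Complex

lemma im_pow_four (w : ℂ) : (w ^ 4).im = 4 * w.re * w.im * (w.re ^ 2 - w.im ^ 2) := by
  simp only [pow_succ, pow_zero, one_mul, mul_re, mul_im]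
  ring

lemma norm_sq_le_of_abs_re_le_of_abs_im_le {w : ℂ} {a b : ℝ} (hre : |w.re| ≤ a)
    (him : |w.im| ≤ b) : ‖w‖ ^ 2 ≤ a ^ 2 + b ^ 2 := by
  rw [Complex.sq_norm, normSq_apply, ← sq, ← sq]
  exact add_le_add (sq_le_sq_of_abs_le hre) (sq_le_sq_of_abs_le him)

lemma abs_im_pow_four_le {w : ℂ} {a : ℝ} (hre : |w.re| ≤ a) (him : |w.im| ≤ a) :
    |(w ^ 4).im| ≤ 4 * a ^ 3 * |w.im| := by
  have ha : 0 ≤ a := (abs_nonneg _).trans hre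
  calc |(w ^ 4).im| = 4 * |w.re| * |w.re ^ 2 - w.im ^ 2| * |w.im| := by
        rw [im_pow_four, abs_mul, abs_mul, abs_mul, abs_of_pos (four_pos : (0:ℝ) < 4)]; ring
    _ ≤ 4 * a * a ^ 2 * |w.im| := by
        gcongr
        exact abs_sq_sub_sq_le hre him
    _ = 4 * a ^ 3 * |w.im| := by ring

end Complex

theorem stmt7_general (δ' r ε : ℝ) (hδ : 0 < δ') (hδ' : δ' < 1 / 4)
    (hr' : r < 7 / 128) (hε : ε ≤ δ' / 8)
    (z w : ℂ) (hz : ‖z - 2‖ ≤ r) (hzim : |z.im| ≤ ε)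
    (hu : |w.re| ≤ 1 / 4) (hv : |w.im| ≤ δ') :
    |(w ^ 4 + 4 * (2 - z)).re| < 1 / 4 ∧ |(w ^ 4 + 4 * (2 - z)).im| < δ' := by
  have hw : ‖w‖ ^ 2 ≤ 1 / 8 := by
    have := Complex.norm_sq_le_of_abs_re_le_of_abs_im_le hu hv
    nlinarith
  have hw4 : ‖w ^ 4‖ ≤ 1 / 64 := by
    rw [norm_pow, show ‖w‖ ^ 4 = (‖w‖ ^ 2) ^ 2 by ring]
    nlinarith [sq_nonneg ‖w‖]
  have him4 : |(w ^ 4).im| ≤ δ' / 16 := by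
    have := Complex.abs_im_pow_four_le hu (hv.trans hδ'.le)
    nlinarith [abs_nonneg w.im]
  constructor
  · calc |(w ^ 4 + 4 * (2 - z)).re| ≤ ‖w ^ 4 + 4 * (2 - z)‖ := Complex.abs_re_le_norm _
      _ ≤ ‖w ^ 4‖ + 4 * ‖z - 2‖ := by
          refine (norm_add_le _ _).trans_eq ?_
          rw [norm_mul, norm_sub_rev]; norm_num
      _ < 1 / 4 := by linarith
  · have hIm : (w ^ 4 + 4 * (2 - z)).im = (w ^ 4).im - 4 * z.im := by simp [sub_eq_add_neg]
    rw [hIm]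
    calc |(w ^ 4).im - 4 * z.im| ≤ |(w ^ 4).im| + 4 * |z.im| := by
          refine (abs_sub _ _).trans_eq ?_
          rw [abs_mul, abs_of_pos (four_pos : (0:ℝ) < 4)]
      _ < δ' := by linarith

/-- The square `S = {|Re w| ≤ 1/4, |Im w| ≤ δ'}` is mapped into its interior by
`w ↦ w⁴ + 4(2 - z)` when `|z - 2| ≤ r < 7/128` and `|Im z| ≤ ε ≤ δ'/8`. -/
theorem stmt7 (δ' r ε : ℝ) (hδ : 0 < δ') (hδ' : δ' < 1 / 4)
    (hr : 0 < r) (hr' : r < 7 / 128) (hε : ε ≤ δ' / 8)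
    (z w : ℂ) (hz : ‖z - 2‖ ≤ r) (hzim : |z.im| ≤ ε)
    (hu : |w.re| ≤ 1 / 4) (hv : |w.im| ≤ δ') :
    |(w ^ 4 + 4 * (2 - z)).re| < 1 / 4 ∧ |(w ^ 4 + 4 * (2 - z)).im| < δ' :=
  stmt7_general δ' r ε hδ hδ' hr' hε z w hz hzim hu hv
end

section
/- Define m : ℝ/ℤ → ℝ/ℤ by m(t) = 4t. Then the union over all j ≥ 2 of the intervals (3/4ʲ, 13/4ʲ) ∪ (−13/4ʲ, −3/4ʲ) (taken modulo 1) covers ℝ/ℤ ∖ {0}. Moreover m⁻¹((3/16, 13/16)) contains (3/64, 13/64) ∪ (51/64, 61/64). -/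
private lemma coe1_sub_one (a : ℝ) :
    ((a - 1 : ℝ) : AddCircle (1:ℝ)) = (a : AddCircle (1:ℝ)) := by
  rw [AddCircle.coe_sub, AddCircle.coe_period (1:ℝ), sub_zero]

private lemma coe1_fract (t : ℝ) :
    ((Int.fract t : ℝ) : AddCircle (1:ℝ)) = (t : AddCircle (1:ℝ)) := by
  rw [Int.fract, AddCircle.coe_sub]
  have h : ((⌊t⌋ : ℝ) : AddCircle (1:ℝ)) = 0 := by
    rw [AddCircle.coe_eq_zero_iff]; exact ⟨⌊t⌋, by simp⟩
  rw [h, sub_zero]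

private lemma find_j {s : ℝ} (h0 : 0 < s) (h1 : s < 13 / 16) :
    ∃ j : ℕ, 2 ≤ j ∧ 3 / 4 ^ j < s ∧ s < 13 / 4 ^ j := by
  have hex : ∃ k : ℕ, (3:ℝ) / 4 ^ (k + 2) < s := by
    obtain ⟨k, hk⟩ := pow_unbounded_of_one_lt ((3:ℝ) / s) (by norm_num : (1:ℝ) < 4)
    refine ⟨k, ?_⟩
    rw [div_lt_iff₀ (by positivity)]
    rw [div_lt_iff₀ h0] at hk
    calc (3:ℝ) < 4 ^ k * s := hk
      _ ≤ 4 ^ (k + 2) * s := by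
          have : (4:ℝ) ^ k ≤ 4 ^ (k + 2) :=
            pow_le_pow_right₀ (by norm_num) (by omega)
          nlinarith
      _ = s * 4 ^ (k + 2) := by ring
  classical
  set k := Nat.find hex with hkdef
  have hks : (3:ℝ) / 4 ^ (k + 2) < s := Nat.find_spec hex
  refine ⟨k + 2, by omega, hks, ?_⟩
  rcases Nat.eq_zero_or_pos k with hk0 | hkpos
  · rw [hk0]; norm_num; linarith
  · have hnot : s ≤ (3:ℝ) / 4 ^ (k - 1 + 2) :=
      le_of_not_gt (Nat.find_min hex (by omega))
    have hkk : k - 1 + 2 + 1 = k + 2 := by omega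
    have h4 : (3:ℝ) / 4 ^ (k - 1 + 2) = 12 / 4 ^ (k + 2) := by
      rw [div_eq_div_iff (by positivity) (by positivity), ← hkk, pow_succ]; ring
    have h13 : (12:ℝ) / 4 ^ (k + 2) < 13 / 4 ^ (k + 2) := by
      gcongr <;> norm_num
    rw [h4] at hnot
    linarith

/-- On the circle `ℝ/ℤ`, the intervals `(3/4ʲ, 13/4ʲ) ∪ (-13/4ʲ, -3/4ʲ)` for `j ≥ 2`
cover the complement of `0`, and the preimage of `(3/16, 13/16)` under `t ↦ 4t`
contains `(3/64, 13/64) ∪ (51/64, 61/64)`. -/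
theorem stmt9 :
    (Set.univ \ {(0 : AddCircle (1 : ℝ))} ⊆
      ⋃ j ∈ {j : ℕ | 2 ≤ j},
        ((fun t : ℝ => (t : AddCircle (1 : ℝ))) '' Set.Ioo (3 / 4 ^ j) (13 / 4 ^ j) ∪
          (fun t : ℝ => (t : AddCircle (1 : ℝ))) '' Set.Ioo (-13 / 4 ^ j) (-3 / 4 ^ j))) ∧
    ((fun t : ℝ => (t : AddCircle (1 : ℝ))) '' Set.Ioo (3 / 64) (13 / 64) ∪
      (fun t : ℝ => (t : AddCircle (1 : ℝ))) '' Set.Ioo (51 / 64) (61 / 64) ⊆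
      (fun x : AddCircle (1 : ℝ) => (4 : ℕ) • x) ⁻¹'
        ((fun t : ℝ => (t : AddCircle (1 : ℝ))) '' Set.Ioo (3 / 16) (13 / 16))) := by
  refine ⟨?_, ?_⟩
  · rintro x ⟨-, hx0⟩
    simp only [Set.mem_singleton_iff] at hx0
    obtain ⟨t, rfl⟩ := QuotientAddGroup.mk_surjective x
    set s := Int.fract t with hs
    have hst : (s : AddCircle (1:ℝ)) = (t : AddCircle (1:ℝ)) := coe1_fract t
    have hs0 : 0 ≤ s := Int.fract_nonneg t
    have hs1 : s < 1 := Int.fract_lt_one t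
    have hspos : 0 < s := by
      rcases lt_or_eq_of_le hs0 with h | h
      · exact h
      · exfalso; apply hx0; rw [← hst, ← h]; norm_num
    simp only [Set.mem_iUnion, Set.mem_setOf_eq]
    rcases lt_or_ge s (13/16) with hcase | hcase
    · obtain ⟨j, hj2, hlo, hhi⟩ := find_j hspos hcase
      exact ⟨j, hj2, Or.inl ⟨s, ⟨hlo, hhi⟩, hst⟩⟩
    · have h1s : 0 < 1 - s := by linarith
      have h1s' : 1 - s < 13/16 := by linarith
      obtain ⟨j, hj2, hlo, hhi⟩ := find_j h1s h1s'
      refine ⟨j, hj2, Or.inr ⟨s - 1, ⟨?_, ?_⟩, (coe1_sub_one s).trans hst⟩⟩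
      · rw [neg_div]; linarith
      · rw [neg_div]; linarith
  · rintro x (⟨t, ht, rfl⟩ | ⟨t, ht, rfl⟩) <;>
      simp only [Set.mem_Ioo] at ht <;>
      simp only [Set.mem_preimage, ← AddCircle.coe_nsmul]
    · refine ⟨(4:ℕ) • t, ⟨?_, ?_⟩, rfl⟩ <;>
        · simp only [nsmul_eq_mul]; push_cast; linarith
    · refine ⟨(4:ℕ) • t - 3, ⟨?_, ?_⟩, ?_⟩
      · simp only [nsmul_eq_mul]; push_cast; linarith
      · simp only [nsmul_eq_mul]; push_cast; linarith
      · have h3 : ((4:ℕ) • t - 3 : ℝ) = ((4:ℕ) • t - 1) - 1 - 1 := by ring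
        rw [h3]
        exact (coe1_sub_one _).trans ((coe1_sub_one _).trans (coe1_sub_one _))
end
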